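/- Let H be a real m × n matrix whose kernel is exactly the span of the all-ones vector 𝟙, and let i be a row index. Suppose θ* minimizes card(Hθ) over all θ ∈ ℝⁿ with (Hθ)_i = 1. Then I* := supp(Hθ*) satisfies: (a) i ∈ I*; (b) rank(H(Ī*, j̄₀)) < n − 1 for every column index j₀; (c) no strictly proper subset I' ⊊ I* satisfies rank(H(Ī', j̄₀)) < n − 1; and (d) card(I*) is minimal among all sets with properties (a)–(c), i.e., I* is a minimum-cardinality critical tuple containing measurement i. -/

import Mathlib

open Matrix

/-- The support of the residual vector `Hθ`: the set of measurements with nonzero value. -/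
noncomputable def resid {m n : ℕ} (H : Matrix (Fin m) (Fin n) ℝ) (θ : Fin n → ℝ) :
    Finset (Fin m) := Finset.univ.filter fun j => H.mulVec θ j ≠ 0

/-- The submatrix `H(Ī, j̄₀)` of `H`: rows in the complement of `I`, all columns except `j₀`. -/
def subm {m n : ℕ} (H : Matrix (Fin m) (Fin n) ℝ) (I : Finset (Fin m)) (j₀ : Fin n) :
    Matrix {j : Fin m // j ∉ I} {l : Fin n // l ≠ j₀} ℝ := fun r c => H r.1 c.1

/-- Removing the measurements in `I` renders the network unobservable:
`rank (H(Ī, j̄₀)) < n - 1` for some reference column `j₀`. -/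
noncomputable def Deficient {m n : ℕ} (H : Matrix (Fin m) (Fin n) ℝ)
    (I : Finset (Fin m)) : Prop := ∃ j₀ : Fin n, (subm H I j₀).rank < n - 1

/-!
By observability, `H(Ī, j̄₀)` is rank deficient (for any `j₀`) exactly when some nonzero
residual `Hθ` vanishes outside `I`. Hence `I* = supp (Hθ*)` is deficient. A nonzero residual
supported in a proper subset of `I*` either is nonzero at `i`, and rescales to a feasible point
of smaller support, or vanishes at `i`, and then a multiple of it cancels an entry of `Hθ*`:
both contradict optimality. Finally a critical `J ∋ i` carries a nonzero residual, which cannot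
vanish at `i` (its support would be a deficient proper subset of `J`), so rescaling it gives a
feasible point supported in `J`.
-/

theorem Matrix.rank_lt_card_width_iff {K m n : Type*} [Field K] [Fintype n]
    (A : Matrix m n K) : A.rank < Fintype.card n ↔ ∃ v ≠ 0, A *ᵥ v = 0 := by
  have hrank := LinearMap.finrank_range_add_finrank_ker A.mulVecLin
  rw [Module.finrank_fintype_fun_eq_card] at hrank
  have hker : 0 < Module.finrank K (LinearMap.ker A.mulVecLin) ↔ ∃ v ≠ 0, A *ᵥ v = 0 := by
    simp [Module.finrank_pos_iff_exists_ne_zero, and_comm]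
  rw [← hker, Matrix.rank]
  omega

theorem Matrix.nonempty_of_mulVec_ne_zero {R m n : Type*} [NonUnitalNonAssocSemiring R]
    [Fintype n] {A : Matrix m n R} {v : n → R} (h : A *ᵥ v ≠ 0) : Nonempty n := by
  by_contra hn
  rw [not_nonempty_iff] at hn
  exact h (funext fun _ => by simp [mulVec, dotProduct])

section

variable {m n : ℕ} {H : Matrix (Fin m) (Fin n) ℝ}

theorem mem_resid {θ : Fin n → ℝ} {j : Fin m} : j ∈ resid H θ ↔ (H *ᵥ θ) j ≠ 0 := by
  simp [resid]

theorem resid_smul {c : ℝ} (hc : c ≠ 0) (θ : Fin n → ℝ) : resid H (c • θ) = resid H θ := by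
  ext j
  simp [mem_resid, mulVec_smul, hc]

theorem subm_mulVec_comp_val (I : Finset (Fin m)) {j₀ : Fin n} {θ : Fin n → ℝ}
    (hθ : θ j₀ = 0) : subm H I j₀ *ᵥ (fun c => θ c.1) = fun r => (H *ᵥ θ) r.1 := by
  funext r
  simp only [mulVec, dotProduct, subm]
  rw [← Finset.sum_subtype ({j₀}ᶜ : Finset (Fin n)) (by simp) (fun l => H r.1 l * θ l),
    ← Finset.sum_compl_add_sum {j₀}]
  simp [hθ]

/-- Kernel vectors of `H(Ī, j̄₀)` are the potentials with `θ j₀ = 0` whose residual vanishes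
outside `I`; by observability such a potential is nonzero iff its residual is. -/
theorem rank_subm_lt_iff (hobs : ∀ θ : Fin n → ℝ, H *ᵥ θ = 0 ↔ ∃ c : ℝ, θ = fun _ => c)
    {I : Finset (Fin m)} {j₀ : Fin n} :
    (subm H I j₀).rank < n - 1 ↔ ∃ θ, H *ᵥ θ ≠ 0 ∧ resid H θ ⊆ I := by
  have hcard : Fintype.card {l : Fin n // l ≠ j₀} = n - 1 := by simp
  rw [← hcard, rank_lt_card_width_iff]
  constructor
  · rintro ⟨v, hv0, hv⟩
    set θ : Fin n → ℝ := fun l => if h : l = j₀ then 0 else v ⟨l, h⟩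
    have hθj₀ : θ j₀ = 0 := by simp [θ]
    have hθv : (fun c : {l // l ≠ j₀} => θ c.1) = v := funext fun c => by simp [θ, c.2]
    rw [← hθv, subm_mulVec_comp_val I hθj₀] at hv
    refine ⟨θ, fun h0 => hv0 ?_, fun j hj => ?_⟩
    · obtain ⟨c, hc⟩ := (hobs θ).1 h0
      rw [← hθv, hc]
      funext c'
      simpa [hc] using hθj₀
    · by_contra hjI
      exact mem_resid.1 hj (congrFun hv ⟨j, hjI⟩)
  · rintro ⟨θ, hθ, hθI⟩
    set θ' : Fin n → ℝ := θ - fun _ => θ j₀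
    have hθ' : H *ᵥ θ' = H *ᵥ θ := by
      rw [mulVec_sub, (hobs _).2 ⟨θ j₀, rfl⟩, sub_zero]
    have hθ'j₀ : θ' j₀ = 0 := by simp [θ']
    refine ⟨fun c => θ' c.1, fun h0 => hθ ?_, ?_⟩
    · have : θ' = 0 := funext fun l => by
        by_cases hl : l = j₀
        · rw [hl, hθ'j₀]; rfl
        · exact congrFun h0 ⟨l, hl⟩
      rw [← hθ', this, mulVec_zero]
    · rw [subm_mulVec_comp_val I hθ'j₀, hθ']
      funext r
      by_contra hr
      exact r.2 (hθI (mem_resid.2 hr))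

theorem deficient_iff (hobs : ∀ θ : Fin n → ℝ, H *ᵥ θ = 0 ↔ ∃ c : ℝ, θ = fun _ => c)
    {I : Finset (Fin m)} : Deficient H I ↔ ∃ θ, H *ᵥ θ ≠ 0 ∧ resid H θ ⊆ I := by
  refine ⟨fun ⟨_, h⟩ => (rank_subm_lt_iff hobs).1 h, fun ⟨θ, hθ, hθI⟩ => ?_⟩
  obtain ⟨j₀⟩ := nonempty_of_mulVec_ne_zero hθ
  exact ⟨j₀, (rank_subm_lt_iff hobs).2 ⟨θ, hθ, hθI⟩⟩

/-- The witness is `θ + t • φ`, with `t` chosen to cancel an entry of `Hθ` where `Hφ ≠ 0`. -/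
theorem exists_resid_ssubset {θ φ : Fin n → ℝ} {i : Fin m} (hφ : H *ᵥ φ ≠ 0)
    (hφi : (H *ᵥ φ) i = 0) (hφθ : resid H φ ⊆ resid H θ) :
    ∃ θ', (H *ᵥ θ') i = (H *ᵥ θ) i ∧ resid H θ' ⊂ resid H θ := by
  obtain ⟨j, hj⟩ : ∃ j, (H *ᵥ φ) j ≠ 0 := Function.ne_iff.1 hφ
  set t := -(H *ᵥ θ) j / (H *ᵥ φ) j
  have hmv : H *ᵥ (θ + t • φ) = H *ᵥ θ + t • H *ᵥ φ := by
    rw [mulVec_add, mulVec_smul]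
  refine ⟨θ + t • φ, by simp [hmv, hφi], ?_⟩
  have hsub : resid H (θ + t • φ) ⊆ resid H θ := fun k hk => by
    by_contra hkθ
    have hkφ : k ∉ resid H φ := fun h => hkθ (hφθ h)
    simp only [mem_resid, not_not] at hk hkθ hkφ
    simp [hmv, hkθ, hkφ] at hk
  refine (Finset.ssubset_iff_of_subset hsub).2 ⟨j, hφθ (mem_resid.2 hj), ?_⟩
  rw [mem_resid, not_not, hmv]
  simp only [Pi.add_apply, Pi.smul_apply, smul_eq_mul, t]
  field_simp
  ring

end

/-- For an observable network, if `θ*` minimizes `card (Hθ)` subject to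
`(Hθ)_i = 1`, then `I* := supp (Hθ*)` (a) contains `i`, (b) satisfies
`rank (H(Ī*, j̄₀)) < n - 1` for every reference column `j₀`, (c) has no strictly proper
subset satisfying the rank-deficiency condition, and (d) has minimum cardinality among
all sets with properties (a)–(c). -/
theorem stmt4 (m n : ℕ) (H : Matrix (Fin m) (Fin n) ℝ)
    (hobs : ∀ θ : Fin n → ℝ, H.mulVec θ = 0 ↔ ∃ c : ℝ, θ = fun _ => c)
    (i : Fin m) (θs : Fin n → ℝ)
    (hfeas : H.mulVec θs i = 1)
    (hopt : ∀ θ : Fin n → ℝ, H.mulVec θ i = 1 → (resid H θs).card ≤ (resid H θ).card) :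
    i ∈ resid H θs ∧
    (∀ j₀ : Fin n, (subm H (resid H θs) j₀).rank < n - 1) ∧
    (∀ I' ⊂ resid H θs, ¬ Deficient H I') ∧
    (∀ J : Finset (Fin m), i ∈ J →
      (∀ j₀ : Fin n, (subm H J j₀).rank < n - 1) →
      (∀ J' ⊂ J, ¬ Deficient H J') →
      (resid H θs).card ≤ J.card) := by
  have hθs : H *ᵥ θs ≠ 0 := fun h => by simp [h] at hfeas
  have hle (θ : Fin n → ℝ) (hθi : (H *ᵥ θ) i ≠ 0) : (resid H θs).card ≤ (resid H θ).card := by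
    have := hopt (((H *ᵥ θ) i)⁻¹ • θ) (by simp [mulVec_smul, hθi])
    rwa [resid_smul (inv_ne_zero hθi)] at this
  refine ⟨mem_resid.2 (by simp [hfeas]), fun j₀ => (rank_subm_lt_iff hobs).2 ⟨θs, hθs, subset_rfl⟩,
    ?_, ?_⟩
  · rintro I' hI' hdef
    obtain ⟨θ, hθ, hθI'⟩ := (deficient_iff hobs).1 hdef
    by_cases hθi : (H *ᵥ θ) i = 0
    · obtain ⟨θ', hθ'i, hθ'⟩ := exists_resid_ssubset hθ hθi (hθI'.trans hI'.subset)
      have := hle θ' (by simp [hθ'i, hfeas])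
      have := Finset.card_lt_card hθ'
      omega
    · have := hle θ hθi
      have := Finset.card_le_card hθI'
      have := Finset.card_lt_card hI'
      omega
  · intro J hiJ hrank hmin
    obtain ⟨j₀⟩ := nonempty_of_mulVec_ne_zero hθs
    obtain ⟨θ, hθ, hθJ⟩ := (rank_subm_lt_iff hobs).1 (hrank j₀)
    by_cases hθi : (H *ᵥ θ) i = 0
    · exact absurd ((deficient_iff hobs).2 ⟨θ, hθ, subset_rfl⟩)
        (hmin _ ⟨hθJ, fun h => mem_resid.1 (h hiJ) hθi⟩)
    · exact (hle θ hθi).trans (Finset.card_le_card hθJ)
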